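/- arXiv:1310.2652 — 3 statements merged into one kernel-verified Lean document; each statement's English description precedes it below -/
import Mathlib

section
/- Define F : ℝ² → ℝ₂⁸ by F(s,t) = (a₁ cosh(s/c), a₁ sinh(s/c), a₂ cos(t/c), a₂ sin(t/c), a₃ cosh(t/d), a₃ sinh(t/d), a₄ cos(s/d), a₄ sin(s/d)), where a₁²/c² + a₄²/d² = 1 = a₂²/c² + a₃²/d², c,d ≠ 0. Then F is an isometric immersion of the flat ℝ²: ⟨∂F/∂s, ∂F/∂s⟩ = 1 = ⟨∂F/∂t, ∂F/∂t⟩ and ⟨∂F/∂s, ∂F/∂t⟩ = 0 everywhere. -/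
open Real

theorem F2_isometric_immersion (a₁ a₂ a₃ a₄ c d : ℝ) (hc : c ≠ 0) (hd : d ≠ 0)
    (h1 : a₁ ^ 2 / c ^ 2 + a₄ ^ 2 / d ^ 2 = 1)
    (h2 : a₂ ^ 2 / c ^ 2 + a₃ ^ 2 / d ^ 2 = 1) (s t : ℝ) :
    (-(deriv (fun u => a₁ * Real.cosh (u / c)) s) ^ 2
      + (deriv (fun u => a₁ * Real.sinh (u / c)) s) ^ 2
      + (deriv (fun u => a₄ * Real.cos (u / d)) s) ^ 2
      + (deriv (fun u => a₄ * Real.sin (u / d)) s) ^ 2 = 1) ∧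
    ((deriv (fun u => a₂ * Real.cos (u / c)) t) ^ 2
      + (deriv (fun u => a₂ * Real.sin (u / c)) t) ^ 2
      - (deriv (fun u => a₃ * Real.cosh (u / d)) t) ^ 2
      + (deriv (fun u => a₃ * Real.sinh (u / d)) t) ^ 2 = 1) ∧
    (-(deriv (fun u => a₁ * Real.cosh (u / c)) s) * 0
      + (deriv (fun u => a₁ * Real.sinh (u / c)) s) * 0
      + 0 * (deriv (fun u => a₂ * Real.cos (u / c)) t)
      + 0 * (deriv (fun u => a₂ * Real.sin (u / c)) t)
      - 0 * (deriv (fun u => a₃ * Real.cosh (u / d)) t)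
      + 0 * (deriv (fun u => a₃ * Real.sinh (u / d)) t)
      + (deriv (fun u => a₄ * Real.cos (u / d)) s) * 0
      + (deriv (fun u => a₄ * Real.sin (u / d)) s) * 0 = 0) := by
  have dcosh : ∀ (a e : ℝ), e ≠ 0 → ∀ x, deriv (fun u => a * Real.cosh (u / e)) x
      = a * Real.sinh (x / e) / e := by
    intro a e he x
    have : (fun u => a * Real.cosh (u / e)) = fun u => a * Real.cosh (u * e⁻¹) := by
      funext u; rw [div_eq_mul_inv]
    rw [this]
    have h := ((Real.hasDerivAt_cosh (x * e⁻¹)).comp x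
      ((hasDerivAt_id x).mul_const e⁻¹)).const_mul a
    simpa [div_eq_mul_inv, mul_assoc, mul_comm, mul_left_comm, one_mul] using h.deriv
  have dsinh : ∀ (a e : ℝ), e ≠ 0 → ∀ x, deriv (fun u => a * Real.sinh (u / e)) x
      = a * Real.cosh (x / e) / e := by
    intro a e he x
    have : (fun u => a * Real.sinh (u / e)) = fun u => a * Real.sinh (u * e⁻¹) := by
      funext u; rw [div_eq_mul_inv]
    rw [this]
    have h := ((Real.hasDerivAt_sinh (x * e⁻¹)).comp x
      ((hasDerivAt_id x).mul_const e⁻¹)).const_mul a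
    simpa [div_eq_mul_inv, mul_assoc, mul_comm, mul_left_comm, one_mul] using h.deriv
  have dcos : ∀ (a e : ℝ), e ≠ 0 → ∀ x, deriv (fun u => a * Real.cos (u / e)) x
      = -(a * Real.sin (x / e) / e) := by
    intro a e he x
    have : (fun u => a * Real.cos (u / e)) = fun u => a * Real.cos (u * e⁻¹) := by
      funext u; rw [div_eq_mul_inv]
    rw [this]
    have h := ((Real.hasDerivAt_cos (x * e⁻¹)).comp x
      ((hasDerivAt_id x).mul_const e⁻¹)).const_mul a
    simpa [div_eq_mul_inv, mul_assoc, mul_comm, mul_left_comm, one_mul] using h.deriv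
  have dsin : ∀ (a e : ℝ), e ≠ 0 → ∀ x, deriv (fun u => a * Real.sin (u / e)) x
      = a * Real.cos (x / e) / e := by
    intro a e he x
    have : (fun u => a * Real.sin (u / e)) = fun u => a * Real.sin (u * e⁻¹) := by
      funext u; rw [div_eq_mul_inv]
    rw [this]
    have h := ((Real.hasDerivAt_sin (x * e⁻¹)).comp x
      ((hasDerivAt_id x).mul_const e⁻¹)).const_mul a
    simpa [div_eq_mul_inv, mul_assoc, mul_comm, mul_left_comm, one_mul] using h.deriv
  rw [dcosh a₁ c hc, dsinh a₁ c hc, dcos a₄ d hd, dsin a₄ d hd,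
      dcos a₂ c hc, dsin a₂ c hc, dcosh a₃ d hd, dsinh a₃ d hd]
  have hcs : Real.cosh (s / c) ^ 2 - Real.sinh (s / c) ^ 2 = 1 := Real.cosh_sq_sub_sinh_sq _
  have hct : Real.cosh (t / d) ^ 2 - Real.sinh (t / d) ^ 2 = 1 := Real.cosh_sq_sub_sinh_sq _
  have hss : Real.sin (s / d) ^ 2 + Real.cos (s / d) ^ 2 = 1 := Real.sin_sq_add_cos_sq _
  have hst : Real.sin (t / c) ^ 2 + Real.cos (t / c) ^ 2 = 1 := Real.sin_sq_add_cos_sq _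
  refine ⟨?_, ?_, by ring⟩
  · linear_combination (a₁ ^ 2 / c ^ 2) * hcs + (a₄ ^ 2 / d ^ 2) * hss + h1
  · linear_combination (a₂ ^ 2 / c ^ 2) * hst + (a₃ ^ 2 / d ^ 2) * hct + h2
end

section
/- Let γ₁(s) = (a₁ cosh(s/c), a₁ sinh(s/c), a₄ cos(s/d), a₄ sin(s/d)) in ℝ₁⁴ with parameters as in Example 2 (a₁² = r₁²(1−λ₁)/(λ₂−λ₁), a₄² = r₂²λ₁/(λ₂−λ₁), c² = r₁²/(λ₂−λ₁), d² = r₂²/(λ₂−λ₁), 0 < λ₁ < λ₂ < 1, r₁,r₂ > 0, k₁ = −1/r₁², k₂ = −1/r₂², κ = k₁ + k₂). Then γ₁ is unit-speed spacelike and its curvature vector satisfies ⟨γ₁''(s), γ₁''(s)⟩ = (λ₁−λ₂)(κλ₁−k₁) for all s. -/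
open Real

theorem gamma1_ex2_unit_speed_and_curvature (lam₁ lam₂ r₁ r₂ k₁ k₂ κ a₁ a₄ c d : ℝ)
    (hl : 0 < lam₁) (hll : lam₁ < lam₂) (hl1 : lam₂ < 1) (hr₁ : 0 < r₁) (hr₂ : 0 < r₂)
    (hk₁ : k₁ = -1 / r₁ ^ 2) (hk₂ : k₂ = -1 / r₂ ^ 2) (hκ : κ = k₁ + k₂)
    (hc : c ≠ 0) (hd : d ≠ 0)
    (ha₁ : a₁ ^ 2 = r₁ ^ 2 * (1 - lam₁) / (lam₂ - lam₁))
    (ha₄ : a₄ ^ 2 = r₂ ^ 2 * lam₁ / (lam₂ - lam₁))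
    (hc2 : c ^ 2 = r₁ ^ 2 / (lam₂ - lam₁))
    (hd2 : d ^ 2 = r₂ ^ 2 / (lam₂ - lam₁)) (s : ℝ) :
    (-(deriv (fun u => a₁ * Real.cosh (u / c)) s) ^ 2
      + (deriv (fun u => a₁ * Real.sinh (u / c)) s) ^ 2
      + (deriv (fun u => a₄ * Real.cos (u / d)) s) ^ 2
      + (deriv (fun u => a₄ * Real.sin (u / d)) s) ^ 2 = 1) ∧
    (-(deriv (deriv (fun u => a₁ * Real.cosh (u / c))) s) ^ 2
      + (deriv (deriv (fun u => a₁ * Real.sinh (u / c))) s) ^ 2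
      + (deriv (deriv (fun u => a₄ * Real.cos (u / d))) s) ^ 2
      + (deriv (deriv (fun u => a₄ * Real.sin (u / d))) s) ^ 2
      = (lam₁ - lam₂) * (κ * lam₁ - k₁)) := by
  have hdiv : ∀ (e : ℝ) (t : ℝ), HasDerivAt (fun u : ℝ => u / e) (1 / e) t := by
    intro e t
    simpa using (hasDerivAt_id t).div_const e
  have hC : deriv (fun u => a₁ * Real.cosh (u / c))
      = fun t => a₁ * (Real.sinh (t / c) * (1 / c)) := by
    funext t
    exact (((Real.hasDerivAt_cosh (t / c)).comp t (hdiv c t)).const_mul a₁).deriv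
  have hS : deriv (fun u => a₁ * Real.sinh (u / c))
      = fun t => a₁ * (Real.cosh (t / c) * (1 / c)) := by
    funext t
    exact (((Real.hasDerivAt_sinh (t / c)).comp t (hdiv c t)).const_mul a₁).deriv
  have hCos : deriv (fun u => a₄ * Real.cos (u / d))
      = fun t => a₄ * (-Real.sin (t / d) * (1 / d)) := by
    funext t
    exact (((Real.hasDerivAt_cos (t / d)).comp t (hdiv d t)).const_mul a₄).deriv
  have hSin : deriv (fun u => a₄ * Real.sin (u / d))
      = fun t => a₄ * (Real.cos (t / d) * (1 / d)) := by
    funext t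
    exact (((Real.hasDerivAt_sin (t / d)).comp t (hdiv d t)).const_mul a₄).deriv
  have hC2 : ∀ t, deriv (deriv (fun u => a₁ * Real.cosh (u / c))) t
      = a₁ * (Real.cosh (t / c) * (1 / c)) * (1 / c) := by
    intro t
    rw [hC]
    have h3 : HasDerivAt (fun u => a₁ * (Real.sinh (u / c) * (1 / c)))
        (a₁ * (Real.cosh (t / c) * (1 / c)) * (1 / c)) t :=
      ((((Real.hasDerivAt_sinh (t / c)).comp t (hdiv c t)).mul_const (1 / c)).const_mul a₁).congr_deriv
        (by ring)
    exact h3.deriv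
  have hS2 : ∀ t, deriv (deriv (fun u => a₁ * Real.sinh (u / c))) t
      = a₁ * (Real.sinh (t / c) * (1 / c)) * (1 / c) := by
    intro t
    rw [hS]
    have h3 : HasDerivAt (fun u => a₁ * (Real.cosh (u / c) * (1 / c)))
        (a₁ * (Real.sinh (t / c) * (1 / c)) * (1 / c)) t :=
      ((((Real.hasDerivAt_cosh (t / c)).comp t (hdiv c t)).mul_const (1 / c)).const_mul a₁).congr_deriv
        (by ring)
    exact h3.deriv
  have hCos2 : ∀ t, deriv (deriv (fun u => a₄ * Real.cos (u / d))) t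
      = -(a₄ * (Real.cos (t / d) * (1 / d)) * (1 / d)) := by
    intro t
    rw [hCos]
    have h3 : HasDerivAt (fun u => a₄ * (-Real.sin (u / d) * (1 / d)))
        (-(a₄ * (Real.cos (t / d) * (1 / d)) * (1 / d))) t :=
      (((((Real.hasDerivAt_sin (t / d)).comp t (hdiv d t)).neg).mul_const (1 / d)).const_mul a₄).congr_deriv
        (by ring)
    exact h3.deriv
  have hSin2 : ∀ t, deriv (deriv (fun u => a₄ * Real.sin (u / d))) t
      = -(a₄ * (Real.sin (t / d) * (1 / d)) * (1 / d)) := by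
    intro t
    rw [hSin]
    have h3 : HasDerivAt (fun u => a₄ * (Real.cos (u / d) * (1 / d)))
        (-(a₄ * (Real.sin (t / d) * (1 / d)) * (1 / d))) t :=
      ((((Real.hasDerivAt_cos (t / d)).comp t (hdiv d t)).mul_const (1 / d)).const_mul a₄).congr_deriv
        (by ring)
    exact h3.deriv
  have hΔ : lam₂ - lam₁ ≠ 0 := by linarith
  have ha₁' : a₁ ^ 2 = (1 - lam₁) * c ^ 2 := by rw [ha₁, hc2]; ring
  have ha₄' : a₄ ^ 2 = lam₁ * d ^ 2 := by rw [ha₄, hd2]; ring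
  have hch := Real.cosh_sq_sub_sinh_sq (s / c)
  have hsc := Real.sin_sq_add_cos_sq (s / d)
  have e1 : a₁ ^ 2 / c ^ 2 = 1 - lam₁ := by rw [ha₁']; field_simp
  have e2 : a₄ ^ 2 / d ^ 2 = lam₁ := by rw [ha₄']; field_simp
  have hc4 : c ^ 4 = (c ^ 2) ^ 2 := by ring
  have hd4 : d ^ 4 = (d ^ 2) ^ 2 := by ring
  have e3 : a₁ ^ 2 / c ^ 4 = (1 - lam₁) * (lam₂ - lam₁) / r₁ ^ 2 := by
    rw [hc4, ha₁', hc2]; field_simp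
  have e4 : a₄ ^ 2 / d ^ 4 = lam₁ * (lam₂ - lam₁) / r₂ ^ 2 := by
    rw [hd4, ha₄', hd2]; field_simp
  constructor
  · rw [hC, hS, hCos, hSin]
    linear_combination (a₁ ^ 2 / c ^ 2) * hch + (a₄ ^ 2 / d ^ 2) * hsc + e1 + e2
  · rw [hC2 s, hS2 s, hCos2 s, hSin2 s, hk₁, hκ, hk₁, hk₂]
    linear_combination (-(a₁ ^ 2 / c ^ 4)) * hch + (a₄ ^ 2 / d ^ 4) * hsc - e3 + e4
end

section
/- In the setting of the previous statement, the curvature vector of γ₁ is lightlike (⟨γ₁'', γ₁''⟩ = 0) if and only if κλ₁ = k₁, where κ = k₁ + k₂, k₁ = −1/r₁², k₂ = −1/r₂². -/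
/-!
Each coordinate of `γ₁''` is the coordinate of `γ₁` rescaled by `1/c²` or `-1/d²`, so
`cosh² - sinh² = 1` and `cos² + sin² = 1` make `⟨γ₁'', γ₁''⟩ = -a₁²/c⁴ + a₄²/d⁴` constant in `s`.
Substituting the parameters of Example 2 turns this constant into `(λ₂ - λ₁) (k₁ - κ λ₁)`.
-/

open Real

lemma deriv_const_mul_cosh_div (a c : ℝ) :
    deriv (fun u => a * cosh (u / c)) = fun u => a / c * sinh (u / c) := by
  funext x
  exact ((((hasDerivAt_id x).div_const c).cosh).const_mul a).deriv.trans (by simp only [id_eq]; ring)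

lemma deriv_const_mul_sinh_div (a c : ℝ) :
    deriv (fun u => a * sinh (u / c)) = fun u => a / c * cosh (u / c) := by
  funext x
  exact ((((hasDerivAt_id x).div_const c).sinh).const_mul a).deriv.trans (by simp only [id_eq]; ring)

lemma deriv_const_mul_cos_div (a c : ℝ) :
    deriv (fun u => a * cos (u / c)) = fun u => -(a / c) * sin (u / c) := by
  funext x
  exact ((((hasDerivAt_id x).div_const c).cos).const_mul a).deriv.trans (by simp only [id_eq]; ring)

lemma deriv_const_mul_sin_div (a c : ℝ) :
    deriv (fun u => a * sin (u / c)) = fun u => a / c * cos (u / c) := by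
  funext x
  exact ((((hasDerivAt_id x).div_const c).sin).const_mul a).deriv.trans (by simp only [id_eq]; ring)

lemma lorentz_sq_deriv_deriv_cosh_sinh_cos_sin (a b c d s : ℝ) :
    -(deriv (deriv (fun u => a * cosh (u / c))) s) ^ 2
      + (deriv (deriv (fun u => a * sinh (u / c))) s) ^ 2
      + (deriv (deriv (fun u => b * cos (u / d))) s) ^ 2
      + (deriv (deriv (fun u => b * sin (u / d))) s) ^ 2
      = -(a ^ 2 / (c ^ 2) ^ 2) + b ^ 2 / (d ^ 2) ^ 2 := by
  simp only [deriv_const_mul_cosh_div, deriv_const_mul_sinh_div, deriv_const_mul_cos_div,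
    deriv_const_mul_sin_div]
  linear_combination (-(a ^ 2 / (c ^ 2) ^ 2)) * cosh_sq_sub_sinh_sq (s / c)
    + (b ^ 2 / (d ^ 2) ^ 2) * sin_sq_add_cos_sq (s / d)

theorem gamma1_lightlike_iff_general (lam₁ lam₂ r₁ r₂ k₁ k₂ κ a₁ a₄ c d : ℝ)
    (hll : lam₁ < lam₂) (hr₁ : 0 < r₁) (hr₂ : 0 < r₂)
    (hk₁ : k₁ = -1 / r₁ ^ 2) (hk₂ : k₂ = -1 / r₂ ^ 2) (hκ : κ = k₁ + k₂)
    (ha₁ : a₁ ^ 2 = r₁ ^ 2 * (1 - lam₁) / (lam₂ - lam₁))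
    (ha₄ : a₄ ^ 2 = r₂ ^ 2 * lam₁ / (lam₂ - lam₁))
    (hc2 : c ^ 2 = r₁ ^ 2 / (lam₂ - lam₁))
    (hd2 : d ^ 2 = r₂ ^ 2 / (lam₂ - lam₁)) (s : ℝ) :
    (-(deriv (deriv (fun u => a₁ * Real.cosh (u / c))) s) ^ 2
      + (deriv (deriv (fun u => a₁ * Real.sinh (u / c))) s) ^ 2
      + (deriv (deriv (fun u => a₄ * Real.cos (u / d))) s) ^ 2
      + (deriv (deriv (fun u => a₄ * Real.sin (u / d))) s) ^ 2 = 0)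
    ↔ κ * lam₁ = k₁ := by
  have hΔ : lam₂ - lam₁ ≠ 0 := sub_ne_zero.mpr hll.ne'
  have hr₁0 : r₁ ≠ 0 := hr₁.ne'
  have hr₂0 : r₂ ≠ 0 := hr₂.ne'
  have hcurv : -(a₁ ^ 2 / (c ^ 2) ^ 2) + a₄ ^ 2 / (d ^ 2) ^ 2
      = (lam₂ - lam₁) * (k₁ - κ * lam₁) := by
    rw [ha₁, ha₄, hc2, hd2, hκ, hk₁, hk₂]
    field_simp
    ring
  rw [lorentz_sq_deriv_deriv_cosh_sinh_cos_sin, hcurv, mul_eq_zero, or_iff_right hΔ, sub_eq_zero,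
    eq_comm]

theorem gamma1_lightlike_iff (lam₁ lam₂ r₁ r₂ k₁ k₂ κ a₁ a₄ c d : ℝ)
    (hl : 0 < lam₁) (hll : lam₁ < lam₂) (hl1 : lam₂ < 1) (hr₁ : 0 < r₁) (hr₂ : 0 < r₂)
    (hk₁ : k₁ = -1 / r₁ ^ 2) (hk₂ : k₂ = -1 / r₂ ^ 2) (hκ : κ = k₁ + k₂)
    (hc : c ≠ 0) (hd : d ≠ 0)
    (ha₁ : a₁ ^ 2 = r₁ ^ 2 * (1 - lam₁) / (lam₂ - lam₁))
    (ha₄ : a₄ ^ 2 = r₂ ^ 2 * lam₁ / (lam₂ - lam₁))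
    (hc2 : c ^ 2 = r₁ ^ 2 / (lam₂ - lam₁))
    (hd2 : d ^ 2 = r₂ ^ 2 / (lam₂ - lam₁)) (s : ℝ) :
    (-(deriv (deriv (fun u => a₁ * Real.cosh (u / c))) s) ^ 2
      + (deriv (deriv (fun u => a₁ * Real.sinh (u / c))) s) ^ 2
      + (deriv (deriv (fun u => a₄ * Real.cos (u / d))) s) ^ 2
      + (deriv (deriv (fun u => a₄ * Real.sin (u / d))) s) ^ 2 = 0)
    ↔ κ * lam₁ = k₁ :=
  gamma1_lightlike_iff_general lam₁ lam₂ r₁ r₂ k₁ k₂ κ a₁ a₄ c d hll hr₁ hr₂ hk₁ hk₂ hκ ha₁ ha₄ hc2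
    hd2 s
end
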